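/- Let α be irrational with convergents p_n/q_n and z_n = q_nα − p_n, let n be even, and on ℝ/ℤ set I_n^0 = [0, |z_{n+1}|). Then for every x ∈ I_n^0, the first forward return time min{j ∈ ℤ₊ : x + jα (mod 1) ∈ I_n^0} equals either q_{n+2} or q_{n+2} + q_{n+1}. -/

import Mathlib

/-- Gauss map iterates of `α`: `x₀ = {α}`, `x_{n+1} = {1/x_n}`. -/
noncomputable def gaussIter (α : ℝ) : ℕ → ℝ
  | 0 => Int.fract α
  | n + 1 => Int.fract (gaussIter α n)⁻¹

/-- `cfa α n` is the partial quotient `a_{n+1} = ⌊1/x_n⌋` of the continued fraction of `α`. -/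
noncomputable def cfa (α : ℝ) (n : ℕ) : ℕ := ⌊(gaussIter α n)⁻¹⌋₊

/-- Denominators `q_n` of the continued fraction convergents of `α`:
`q₀ = 1`, `q₁ = a₁`, `q_{n+2} = a_{n+2} q_{n+1} + q_n`. -/
noncomputable def cfq (α : ℝ) : ℕ → ℕ
  | 0 => 1
  | 1 => cfa α 0
  | n + 2 => cfa α (n + 1) * cfq α (n + 1) + cfq α n

/-- Numerators `p_n` of the continued fraction convergents of `α`:
`p₀ = ⌊α⌋`, `p₁ = a₁⌊α⌋ + 1`, `p_{n+2} = a_{n+2} p_{n+1} + p_n`. -/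
noncomputable def cfp (α : ℝ) : ℕ → ℤ
  | 0 => ⌊α⌋
  | 1 => cfa α 0 * ⌊α⌋ + 1
  | n + 2 => cfa α (n + 1) * cfp α (n + 1) + cfp α n

/-- `z_n = q_n α - p_n`. -/
noncomputable def cfz (α : ℝ) (n : ℕ) : ℝ := (cfq α n : ℝ) * α - (cfp α n : ℝ)

/-- The arc `[c, d) (mod 1)` on the circle `ℝ/ℤ`. -/
noncomputable def arc (c d : ℝ) : Set (AddCircle (1 : ℝ)) :=
  (fun t : ℝ => (t : AddCircle (1 : ℝ))) '' Set.Ico c d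

/-! The errors `z_k` satisfy `z_{k+1} = -x_{k+1} z_k`, where `x_k` are the Gauss-map iterates, so
they alternate in sign, decrease in size, and `|z_{k+1}| + |z_{k+2}| ≤ |z_k|`. Writing `(j, m)` in
the unimodular basis `(q_k, p_k), (q_{k+1}, p_{k+1})` gives the best approximation property
`|z_k| ≤ |jα - m|` for `0 < j < q_{k+1}`.

For even `n` put `β = |z_{n+1}| = -z_{n+1}` and `γ = z_{n+2} > 0`. Best approximation at level
`n + 1` rules out a return before time `q_{n+2}`, when the orbit is at `x + γ`. If `x + γ < β` this
is the return. Otherwise `x + γ ∈ [β, β + γ)` with `β + γ ≤ |z_n|`, so best approximation at level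
`n` rules out a return during the next `q_{n+1} - 1` steps, after which the orbit is at
`x + γ - β ∈ [0, β)`. -/

theorem Irrational.fract {y : ℝ} (h : Irrational y) : Irrational (Int.fract y) :=
  h.sub_intCast _

section ContinuedFraction

variable {α : ℝ}

theorem gaussIter_nonneg (α : ℝ) (n : ℕ) : 0 ≤ gaussIter α n := by
  cases n <;> exact Int.fract_nonneg _

theorem gaussIter_lt_one (α : ℝ) (n : ℕ) : gaussIter α n < 1 := by
  cases n <;> exact Int.fract_lt_one _

theorem irrational_gaussIter (hα : Irrational α) : ∀ n, Irrational (gaussIter α n)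
  | 0 => hα.fract
  | n + 1 => (irrational_gaussIter hα n).inv.fract

theorem gaussIter_pos (hα : Irrational α) (n : ℕ) : 0 < gaussIter α n :=
  (gaussIter_nonneg α n).lt_of_ne' (irrational_gaussIter hα n).ne_zero

theorem cfa_add_gaussIter_succ (α : ℝ) (n : ℕ) :
    (cfa α n : ℝ) + gaussIter α (n + 1) = (gaussIter α n)⁻¹ := by
  rw [cfa, natCast_floor_eq_intCast_floor (inv_nonneg.2 (gaussIter_nonneg α n))]
  exact Int.floor_add_fract _

theorem one_le_cfa (hα : Irrational α) (n : ℕ) : 1 ≤ cfa α n :=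
  Nat.le_floor <| by
    simpa using (one_le_inv₀ (gaussIter_pos hα n)).2 (gaussIter_lt_one α n).le

theorem one_le_cfq (hα : Irrational α) : ∀ n, 1 ≤ cfq α n
  | 0 => le_rfl
  | 1 => one_le_cfa hα 0
  | n + 2 => Nat.le_add_left_of_le (one_le_cfq hα n)

theorem cfz_zero (α : ℝ) : cfz α 0 = gaussIter α 0 := by
  simp only [cfz, cfq, cfp, Nat.cast_one, one_mul]
  rfl

theorem cfz_add_two (α : ℝ) (n : ℕ) :
    cfz α (n + 2) = cfa α (n + 1) * cfz α (n + 1) + cfz α n := by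
  simp only [cfz, cfq, cfp]
  push_cast
  ring

theorem cfz_succ (hα : Irrational α) (n : ℕ) :
    cfz α (n + 1) = -(gaussIter α (n + 1) * cfz α n) := by
  have hinv (k : ℕ) : (cfa α k + gaussIter α (k + 1)) * gaussIter α k = 1 := by
    rw [cfa_add_gaussIter_succ, inv_mul_cancel₀ (gaussIter_pos hα k).ne']
  induction n with
  | zero =>
    have h0 : gaussIter α 0 = α - ⌊α⌋ := rfl
    simp only [cfz, cfq, cfp]
    push_cast
    linear_combination hinv 0 - (cfa α 0 + gaussIter α 1) * h0
  | succ k ih =>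
    rw [cfz_add_two]
    linear_combination (cfa α (k + 1) + gaussIter α (k + 2)) * ih - cfz α k * hinv (k + 1)

theorem neg_one_pow_mul_cfz_pos (hα : Irrational α) : ∀ n, 0 < (-1) ^ n * cfz α n
  | 0 => by simpa [cfz_zero] using gaussIter_pos hα 0
  | n + 1 => by
    have h := mul_pos (gaussIter_pos hα (n + 1)) (neg_one_pow_mul_cfz_pos hα n)
    rw [cfz_succ hα]
    linarith [show (-1) ^ (n + 1) * -(gaussIter α (n + 1) * cfz α n)
      = gaussIter α (n + 1) * ((-1) ^ n * cfz α n) by ring]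

theorem abs_cfz (hα : Irrational α) (n : ℕ) : |cfz α n| = (-1) ^ n * cfz α n := by
  rw [← abs_of_pos (neg_one_pow_mul_cfz_pos hα n), abs_mul, abs_pow, abs_neg, abs_one, one_pow,
    one_mul]

theorem cfz_eq_abs_of_even (hα : Irrational α) {n : ℕ} (hn : Even n) : cfz α n = |cfz α n| := by
  rw [abs_cfz hα, hn.neg_one_pow, one_mul]

theorem cfz_eq_neg_abs_of_odd (hα : Irrational α) {n : ℕ} (hn : Odd n) :
    cfz α n = -|cfz α n| := by
  rw [abs_cfz hα, hn.neg_one_pow]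
  ring

theorem cfz_mul_cfz_succ_nonpos (hα : Irrational α) (n : ℕ) : cfz α n * cfz α (n + 1) ≤ 0 := by
  rw [cfz_succ hα]
  nlinarith [gaussIter_nonneg α (n + 1), sq_nonneg (cfz α n)]

theorem abs_cfz_succ_lt (hα : Irrational α) (n : ℕ) : |cfz α (n + 1)| < |cfz α n| := by
  rw [cfz_succ hα, abs_neg, abs_mul, abs_of_pos (gaussIter_pos hα _)]
  refine mul_lt_of_lt_one_left ?_ (gaussIter_lt_one α _)
  exact abs_cfz hα n ▸ neg_one_pow_mul_cfz_pos hα n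

theorem abs_cfz_lt_one (hα : Irrational α) : ∀ n, |cfz α n| < 1
  | 0 => by
    rw [cfz_zero, abs_of_nonneg (gaussIter_nonneg α 0)]
    exact gaussIter_lt_one α 0
  | n + 1 => (abs_cfz_succ_lt hα n).trans (abs_cfz_lt_one hα n)

theorem abs_cfz_succ_add_abs_cfz_add_two_le (hα : Irrational α) (n : ℕ) :
    |cfz α (n + 1)| + |cfz α (n + 2)| ≤ |cfz α n| := by
  have ha : (1 : ℝ) ≤ cfa α (n + 1) := by exact_mod_cast one_le_cfa hα (n + 1)
  have hz := neg_one_pow_mul_cfz_pos hα (n + 1)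
  rw [abs_cfz hα, abs_cfz hα, abs_cfz hα, cfz_add_two]
  simp only [pow_succ] at hz ⊢
  nlinarith [mul_nonneg (sub_nonneg.2 ha) hz.le]

theorem cfp_succ_mul_cfq_sub (α : ℝ) :
    ∀ n, cfp α (n + 1) * cfq α n - cfp α n * cfq α (n + 1) = (-1 : ℤ) ^ n
  | 0 => by simp only [cfp, cfq, pow_zero, Nat.cast_one, mul_one]; ring
  | n + 1 => by
    have ih := cfp_succ_mul_cfq_sub α n
    simp only [cfp, cfq] at ih ⊢
    push_cast
    linear_combination (-1 : ℤ) * ih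

theorem exists_eq_cfq_cfp_combination (α : ℝ) (n : ℕ) (j m : ℤ) :
    ∃ a b : ℤ, a * cfq α n + b * cfq α (n + 1) = j ∧ a * cfp α n + b * cfp α (n + 1) = m := by
  have hdet := cfp_succ_mul_cfq_sub α n
  have hsq : (-1 : ℤ) ^ n * (-1) ^ n = 1 := by rw [← mul_pow]; norm_num
  exact ⟨(-1) ^ n * (cfp α (n + 1) * j - cfq α (n + 1) * m),
    (-1) ^ n * (cfq α n * m - cfp α n * j),
    by linear_combination ((-1) ^ n * j) * hdet + j * hsq,
    by linear_combination ((-1) ^ n * m) * hdet + m * hsq⟩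

theorem abs_cfz_le_abs_mul_sub (hα : Irrational α) {n j : ℕ} (hj0 : 0 < j)
    (hj : j < cfq α (n + 1)) (m : ℤ) : |cfz α n| ≤ |j * α - m| := by
  obtain ⟨a, b, hq, hp⟩ := exists_eq_cfq_cfp_combination α n j m
  have hq0 : (1 : ℤ) ≤ cfq α n := by exact_mod_cast one_le_cfq hα n
  have hq1 : (1 : ℤ) ≤ cfq α (n + 1) := by exact_mod_cast one_le_cfq hα (n + 1)
  have hjq : (j : ℤ) < cfq α (n + 1) := by exact_mod_cast hj
  have ha : a ≠ 0 := by
    rintro rfl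
    rcases le_or_gt b 0 with hb | hb <;> nlinarith
  have hab : a * b ≤ 0 := by
    by_contra! hab
    rcases lt_or_gt_of_ne ha with ha | ha
    · nlinarith [neg_of_mul_pos_right hab ha.le]
    · nlinarith [pos_of_mul_pos_right hab ha.le]
  have hsplit : (j : ℝ) * α - m = a * cfz α n + b * cfz α (n + 1) := by
    rw [← Int.cast_natCast j, ← hq, ← hp, cfz, cfz]
    push_cast
    ring
  have hsign : 0 ≤ a * cfz α n * (b * cfz α (n + 1)) := by
    have hab' : (a * b : ℝ) ≤ 0 := by exact_mod_cast hab
    nlinarith [cfz_mul_cfz_succ_nonpos hα n]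
  calc |cfz α n| ≤ |(a : ℝ)| * |cfz α n| :=
        le_mul_of_one_le_left (abs_nonneg _) (by exact_mod_cast Int.one_le_abs ha)
    _ ≤ |a * cfz α n| + |b * cfz α (n + 1)| := by
        rw [abs_mul]
        exact le_add_of_nonneg_right (abs_nonneg _)
    _ = |j * α - m| := by
        rw [hsplit, (abs_add_eq_add_abs_iff _ _).2 (mul_nonneg_iff.1 hsign)]

theorem fract_add_cfq_mul (α y : ℝ) (k : ℕ) :
    Int.fract (y + cfq α k * α) = Int.fract (y + cfz α k) := by
  rw [cfz, ← add_sub_assoc, Int.fract_sub_intCast]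

theorem le_fract_add_mul_of_lt_cfq (hα : Irrational α) {n j : ℕ} (hj0 : 0 < j)
    (hj : j < cfq α (n + 1)) {x c : ℝ} (hx0 : 0 ≤ x) (hxc : x < c) (hc : c ≤ |cfz α n|) :
    c ≤ Int.fract (x + j * α) := by
  by_contra! h
  have hlt : |j * α - ⌊x + j * α⌋| < c := by
    rw [abs_lt]
    constructor <;> linarith [Int.floor_add_fract (x + j * α), Int.fract_nonneg (x + j * α)]
  linarith [abs_cfz_le_abs_mul_sub hα hj0 hj ⌊x + j * α⌋]

end ContinuedFraction

theorem mem_arc_zero_iff {β : ℝ} (hβ : β ≤ 1) (t : ℝ) :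
    (t : AddCircle (1 : ℝ)) ∈ arc 0 β ↔ Int.fract t < β := by
  constructor
  · rintro ⟨s, ⟨hs0, hsβ⟩, hst⟩
    have hs : s ∈ Set.Ico (0 : ℝ) (0 + 1) := ⟨hs0, by linarith⟩
    have ht : Int.fract t ∈ Set.Ico (0 : ℝ) (0 + 1) := ⟨Int.fract_nonneg t, by simp [Int.fract_lt_one]⟩
    rwa [← (AddCircle.coe_eq_coe_iff_of_mem_Ico hs ht).1 (hst.trans (AddCircle.coe_fract t).symm)]
  · exact fun h => ⟨Int.fract t, ⟨Int.fract_nonneg t, h⟩, AddCircle.coe_fract t⟩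

def returnTimes (α x β : ℝ) : Set ℕ :=
  {j : ℕ | 0 < j ∧ ((x + (j : ℝ) * α : ℝ) : AddCircle (1 : ℝ)) ∈ arc 0 β}

theorem mem_returnTimes_iff {α x β : ℝ} (hβ : β ≤ 1) {j : ℕ} :
    j ∈ returnTimes α x β ↔ 0 < j ∧ Int.fract (x + j * α) < β := by
  rw [returnTimes, Set.mem_ofPred_eq, mem_arc_zero_iff hβ]

section ReturnTimes

variable {α x : ℝ} {n : ℕ}

theorem isLeast_returnTimes_cfq_add_two (hα : Irrational α) (hn : Even n) (hx0 : 0 ≤ x)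
    (hx : x + |cfz α (n + 2)| < |cfz α (n + 1)|) :
    IsLeast (returnTimes α x |cfz α (n + 1)|) (cfq α (n + 2)) := by
  have hβ := abs_cfz_lt_one hα (n + 1)
  have hγ := abs_nonneg (cfz α (n + 2))
  refine ⟨(mem_returnTimes_iff hβ.le).2 ⟨one_le_cfq hα _, ?_⟩, fun j hj => ?_⟩
  · rw [fract_add_cfq_mul, cfz_eq_abs_of_even hα (hn.add even_two),
      Int.fract_eq_self.2 ⟨by positivity, by linarith⟩]
    exact hx
  · obtain ⟨hj0, hjβ⟩ := (mem_returnTimes_iff hβ.le).1 hj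
    by_contra! hlt
    exact (le_fract_add_mul_of_lt_cfq hα hj0 hlt hx0 (by linarith) le_rfl).not_gt hjβ

theorem isLeast_returnTimes_cfq_add_two_add_cfq (hα : Irrational α) (hn : Even n) (hx0 : 0 ≤ x)
    (hx1 : x < |cfz α (n + 1)|) (hx : |cfz α (n + 1)| ≤ x + |cfz α (n + 2)|) :
    IsLeast (returnTimes α x |cfz α (n + 1)|) (cfq α (n + 2) + cfq α (n + 1)) := by
  set β := |cfz α (n + 1)|
  set γ := |cfz α (n + 2)|
  have hz1 : cfz α (n + 1) = -β := cfz_eq_neg_abs_of_odd hα hn.add_one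
  have hz2 : cfz α (n + 2) = γ := cfz_eq_abs_of_even hα (hn.add even_two)
  have hγ : 0 ≤ γ := abs_nonneg _
  have hγβ : γ < β := abs_cfz_succ_lt hα (n + 1)
  have hβγ : β + γ ≤ |cfz α n| := abs_cfz_succ_add_abs_cfz_add_two_le hα n
  have hzn : |cfz α n| < 1 := abs_cfz_lt_one hα n
  have hβ1 : β ≤ 1 := by linarith
  have hshift (i : ℕ) :
      Int.fract (x + (cfq α (n + 2) + i : ℕ) * α) = Int.fract (x + γ + i * α) := by
    rw [Nat.cast_add, add_mul, ← add_assoc, add_right_comm, fract_add_cfq_mul, hz2,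
      add_right_comm]
  refine ⟨(mem_returnTimes_iff hβ1).2 ⟨by have := one_le_cfq hα (n + 2); omega, ?_⟩,
    fun j hj => ?_⟩
  · rw [hshift, fract_add_cfq_mul, hz1, ← sub_eq_add_neg,
      Int.fract_eq_self.2 ⟨by linarith, by linarith⟩]
    linarith
  obtain ⟨hj0, hjβ⟩ := (mem_returnTimes_iff hβ1).1 hj
  by_contra! hlt
  rcases lt_or_ge j (cfq α (n + 2)) with hj2 | hj2
  · exact (le_fract_add_mul_of_lt_cfq hα hj0 hj2 hx0 hx1 le_rfl).not_gt hjβ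
  obtain ⟨i, rfl⟩ := Nat.exists_eq_add_of_le hj2
  rw [hshift] at hjβ
  rcases Nat.eq_zero_or_pos i with rfl | hi
  · rw [Nat.cast_zero, zero_mul, add_zero, Int.fract_eq_self.2 ⟨by positivity, by linarith⟩] at hjβ
    linarith
  · have := le_fract_add_mul_of_lt_cfq hα hi (by omega) (by positivity)
      (by linarith : x + γ < β + γ) hβγ
    linarith

end ReturnTimes

/-- For even `n` and `x ∈ I_n⁰ = [0, |z_{n+1}|)`, the first forward return time of `x` to
`I_n⁰` equals either `q_{n+2}` or `q_{n+2} + q_{n+1}`. -/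
theorem statement14 (α : ℝ) (hα : Irrational α) (n : ℕ) (hn : Even n)
    (x : ℝ) (hx0 : 0 ≤ x) (hx1 : x < |cfz α (n + 1)|) :
    IsLeast {j : ℕ | 0 < j ∧
        ((x + (j : ℝ) * α : ℝ) : AddCircle (1 : ℝ)) ∈ arc 0 |cfz α (n + 1)|}
      (cfq α (n + 2)) ∨
    IsLeast {j : ℕ | 0 < j ∧
        ((x + (j : ℝ) * α : ℝ) : AddCircle (1 : ℝ)) ∈ arc 0 |cfz α (n + 1)|}
      (cfq α (n + 2) + cfq α (n + 1)) := by
  rcases lt_or_ge (x + |cfz α (n + 2)|) |cfz α (n + 1)| with h | h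
  · exact Or.inl (isLeast_returnTimes_cfq_add_two hα hn hx0 h)
  · exact Or.inr (isLeast_returnTimes_cfq_add_two_add_cfq hα hn hx0 hx1 h)
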